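/- arXiv:2405.02829 — 4 statements merged into one kernel-verified Lean document; each statement's English description precedes it below -/
import Mathlib

section
/- Let G be a graph, X an odd cycle transversal of G, and (A,B) the color classes of the bipartite graph G − X. For a subset Y ⊆ X, let G_Y be the bipartite subgraph of G with color classes A ∪ Y and B ∪ (X \ Y) containing exactly those edges of G with one endpoint in A ∪ Y and the other in B ∪ (X \ Y). Then for every perfect matching M of G, there exists a subset Y ⊆ X such that M is a perfect matching of G_Y. -/
/-- `M` is a perfect matching of `G`, viewed as a set of edges: every edge of `M`
is an edge of `G`, and every vertex lies on exactly one edge of `M`. -/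
def PerfM {V : Type*} (G : SimpleGraph V) (M : Set (Sym2 V)) : Prop :=
  M ⊆ G.edgeSet ∧ ∀ v : V, ∃! e, e ∈ M ∧ v ∈ e

/-- The bipartite subgraph `G_Y` of `G` with color classes `A ∪ Y` and `B ∪ (X \ Y)`,
keeping exactly the edges of `G` with one endpoint in each class. -/
def GY {V : Type*} (G : SimpleGraph V) (X A B Y : Set V) : SimpleGraph V where
  Adj u v := G.Adj u v ∧
    ((u ∈ A ∪ Y ∧ v ∈ B ∪ (X \ Y)) ∨ (v ∈ A ∪ Y ∧ u ∈ B ∪ (X \ Y)))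
  symm := by
    constructor
    intro u v h
    exact ⟨h.1.symm, h.2.elim Or.inr Or.inl⟩
  loopless := by
    constructor
    intro v h
    exact G.loopless.irrefl v h.1

/-!
Each vertex of `X` is placed on a side according to its partner in `M`: opposite to the partner
when that partner lies in `A` or `B`, and, when both ends of a matching edge lie in `X`, by
comparing the two ends in an arbitrary linear order of `V`. Since `A` and `B` are independent,
every matching edge then crosses between `A ∪ Y` and `B ∪ (X \ Y)`.
-/

namespace PerfM

variable {V : Type*} {G : SimpleGraph V} {M : Set (Sym2 V)}

theorem eq_of_mem_of_mem (hM : PerfM G M) {u v w : V} (hv : s(u, v) ∈ M) (hw : s(u, w) ∈ M) :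
    v = w := by
  obtain ⟨e, -, he⟩ := hM.2 u
  have h : s(u, v) = s(u, w) :=
    (he _ ⟨hv, Sym2.mem_mk_left u v⟩).trans (he _ ⟨hw, Sym2.mem_mk_left u w⟩).symm
  rcases Sym2.eq_iff.mp h with ⟨-, h⟩ | ⟨rfl, rfl⟩
  · exact h
  · rfl

theorem adj (hM : PerfM G M) {u v : V} (huv : s(u, v) ∈ M) : G.Adj u v :=
  hM.1 huv

theorem mono {H : SimpleGraph V} (hM : PerfM G M) (hH : M ⊆ H.edgeSet) : PerfM H M :=
  ⟨hH, hM.2⟩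

end PerfM

section MatchingSide

variable {V : Type*} [LinearOrder V] {G : SimpleGraph V} {M : Set (Sym2 V)} {X A B : Set V}

variable (M X A B) in
def matchingSide : Set V :=
  {x ∈ X | ∃ w, s(x, w) ∈ M ∧ w ∉ A ∧ (w ∈ B ∨ (w ∈ X ∧ x < w))}

theorem matchingSide_subset : matchingSide M X A B ⊆ X :=
  fun _ hx => hx.1

theorem mem_matchingSide_iff (hM : PerfM G M) {x w : V} (hxw : s(x, w) ∈ M) :
    x ∈ matchingSide M X A B ↔ x ∈ X ∧ w ∉ A ∧ (w ∈ B ∨ (w ∈ X ∧ x < w)) := by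
  refine ⟨fun ⟨hx, w', hxw', hw'⟩ => ?_, fun ⟨hx, hw⟩ => ⟨hx, w, hxw, hw⟩⟩
  obtain rfl := hM.eq_of_mem_of_mem hxw hxw'
  exact ⟨hx, hw'⟩

theorem gy_matchingSide_adj_of_mem_A (hcover : ∀ v : V, v ∈ A ∨ v ∈ B ∨ v ∈ X)
    (hA : ∀ u ∈ A, ∀ v ∈ A, ¬ G.Adj u v) (hM : PerfM G M)
    {u v : V} (huv : s(u, v) ∈ M) (hu : u ∈ A) :
    (GY G X A B (matchingSide M X A B)).Adj u v := by
  refine ⟨hM.adj huv, Or.inl ⟨Or.inl hu, ?_⟩⟩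
  rcases hcover v with hv | hv | hv
  · exact absurd (hM.adj huv) (hA u hu v hv)
  · exact Or.inl hv
  · have hvu : s(v, u) ∈ M := Sym2.eq_swap ▸ huv
    exact Or.inr ⟨hv, fun h => ((mem_matchingSide_iff hM hvu).mp h).2.1 hu⟩

theorem gy_matchingSide_adj_of_mem_B (hcover : ∀ v : V, v ∈ A ∨ v ∈ B ∨ v ∈ X)
    (hB : ∀ u ∈ B, ∀ v ∈ B, ¬ G.Adj u v) (hM : PerfM G M)
    {u v : V} (huv : s(u, v) ∈ M) (hu : u ∈ B) (huA : u ∉ A) (hvA : v ∉ A) :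
    (GY G X A B (matchingSide M X A B)).Adj u v := by
  have hvX : v ∈ X := by
    rcases hcover v with hv | hv | hv
    · exact absurd hv hvA
    · exact absurd (hM.adj huv) (hB u hu v hv)
    · exact hv
  have hvY : v ∈ matchingSide M X A B :=
    (mem_matchingSide_iff hM (Sym2.eq_swap ▸ huv)).mpr ⟨hvX, huA, Or.inl hu⟩
  exact ⟨hM.adj huv, Or.inr ⟨Or.inr hvY, Or.inl hu⟩⟩

theorem gy_matchingSide_adj_of_lt (hM : PerfM G M) {u v : V} (huv : s(u, v) ∈ M)
    (hu : u ∈ X) (hv : v ∈ X) (hvA : v ∉ A) (huB : u ∉ B) (hlt : u < v) :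
    (GY G X A B (matchingSide M X A B)).Adj u v := by
  have huY : u ∈ matchingSide M X A B :=
    (mem_matchingSide_iff hM huv).mpr ⟨hu, hvA, Or.inr ⟨hv, hlt⟩⟩
  have hvY : v ∉ matchingSide M X A B := fun h => by
    obtain ⟨-, -, huB' | ⟨-, hgt⟩⟩ := (mem_matchingSide_iff hM (Sym2.eq_swap ▸ huv)).mp h
    · exact huB huB'
    · exact hlt.asymm hgt
  exact ⟨hM.adj huv, Or.inl ⟨Or.inr huY, Or.inr ⟨hv, hvY⟩⟩⟩

theorem gy_matchingSide_adj (hcover : ∀ v : V, v ∈ A ∨ v ∈ B ∨ v ∈ X)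
    (hA : ∀ u ∈ A, ∀ v ∈ A, ¬ G.Adj u v) (hB : ∀ u ∈ B, ∀ v ∈ B, ¬ G.Adj u v)
    (hM : PerfM G M) {u v : V} (huv : s(u, v) ∈ M) :
    (GY G X A B (matchingSide M X A B)).Adj u v := by
  have hvu : s(v, u) ∈ M := Sym2.eq_swap ▸ huv
  by_cases huA : u ∈ A
  · exact gy_matchingSide_adj_of_mem_A hcover hA hM huv huA
  by_cases hvA : v ∈ A
  · exact (gy_matchingSide_adj_of_mem_A hcover hA hM hvu hvA).symm
  by_cases huB : u ∈ B
  · exact gy_matchingSide_adj_of_mem_B hcover hB hM huv huB huA hvA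
  by_cases hvB : v ∈ B
  · exact (gy_matchingSide_adj_of_mem_B hcover hB hM hvu hvB hvA huA).symm
  have hu : u ∈ X := (hcover u).resolve_left huA |>.resolve_left huB
  have hv : v ∈ X := (hcover v).resolve_left hvA |>.resolve_left hvB
  rcases lt_or_gt_of_ne (hM.adj huv).ne with hlt | hgt
  · exact gy_matchingSide_adj_of_lt hM huv hu hv hvA huB hlt
  · exact (gy_matchingSide_adj_of_lt hM hvu hv hu huA hvB hgt).symm

end MatchingSide

theorem stmt0_general {V : Type*} (G : SimpleGraph V) (X A B : Set V)
    (hcover : ∀ v : V, v ∈ A ∨ v ∈ B ∨ v ∈ X)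
    (hA : ∀ u ∈ A, ∀ v ∈ A, ¬ G.Adj u v) (hB : ∀ u ∈ B, ∀ v ∈ B, ¬ G.Adj u v)
    (M : Set (Sym2 V)) (hM : PerfM G M) :
    ∃ Y ⊆ X, PerfM (GY G X A B Y) M := by
  let : LinearOrder V := IsWellOrder.linearOrder WellOrderingRel
  refine ⟨matchingSide M X A B, matchingSide_subset, hM.mono fun e he => ?_⟩
  induction e using Sym2.ind with
  | _ u v => exact gy_matchingSide_adj hcover hA hB hM he

theorem stmt0 {V : Type*} (G : SimpleGraph V) (X A B : Set V)
    (hcover : ∀ v : V, v ∈ A ∨ v ∈ B ∨ v ∈ X)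
    (hAB : Disjoint A B) (hAX : Disjoint A X) (hBX : Disjoint B X)
    (hA : ∀ u ∈ A, ∀ v ∈ A, ¬ G.Adj u v) (hB : ∀ u ∈ B, ∀ v ∈ B, ¬ G.Adj u v)
    (M : Set (Sym2 V)) (hM : PerfM G M) :
    ∃ Y ⊆ X, PerfM (GY G X A B Y) M :=
  stmt0_general G X A B hcover hA hB M hM
end

section
/- Let G be a 0/1-edge-weighted graph, M a perfect matching in G, and k an integer. Then G has a perfect matching of weight congruent to k modulo 2 if and only if the weight of M is congruent to k modulo 2, or G has an M-alternating cycle of odd weight. -/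
def AltList {V : Type*} (M : Set (Sym2 V)) (l : List (Sym2 V)) : Prop :=
  l.Chain' fun e f => (e ∈ M ↔ f ∉ M)

def AltCycle {V : Type*} (G : SimpleGraph V) (M : Set (Sym2 V)) {x : V}
    (c : G.Walk x x) : Prop :=
  c.IsCycle ∧ AltList M c.edges ∧
    ∀ h : c.edges ≠ [], (c.edges.getLast h ∈ M ↔ c.edges.head h ∉ M)

/-!
The symmetric difference of two perfect matchings is a union of cycles alternating with respect
to both, and flipping a perfect matching along an alternating cycle `C` gives a perfect matching
whose weight differs by `w(C)` modulo 2. Hence an odd alternating cycle changes the parity of `M`.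
Conversely, if a perfect matching `M'` has the other parity, take a cycle in `M ∆ M'`: either it
is odd, or flipping `M'` along it keeps the parity of `M'` and shrinks `M ∆ M'`.
-/

open SimpleGraph Finset
open scoped symmDiff

theorem Finset.sum_symmDiff_modEq_two {ι : Type*} [DecidableEq ι] (s t : Finset ι) (f : ι → ℕ) :
    ∑ i ∈ s ∆ t, f i ≡ ∑ i ∈ s, f i + ∑ i ∈ t, f i [MOD 2] := by
  have key : ∑ i ∈ s ∆ t, f i + 2 * ∑ i ∈ s ∩ t, f i = ∑ i ∈ s, f i + ∑ i ∈ t, f i := by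
    rw [symmDiff_eq_sup_sdiff_inf, sup_eq_union, inf_eq_inter, two_mul, ← add_assoc,
      sum_sdiff inter_subset_union, sum_union_inter]
  unfold Nat.ModEq
  omega

section

variable {V : Type*} {G : SimpleGraph V}

def EdgesAlternate (D S : Set (Sym2 V)) : Prop :=
  ∀ ⦃v : V⦄ ⦃e f : Sym2 V⦄, e ∈ D → f ∈ D → e ≠ f → v ∈ e → v ∈ f → (e ∈ S ↔ f ∉ S)

lemma EdgesAlternate.mono {D D' S : Set (Sym2 V)} (h : EdgesAlternate D S) (hD : D' ⊆ D) :
    EdgesAlternate D' S :=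
  fun _ _ _ he hf => h (hD he) (hD hf)

namespace SimpleGraph.Walk.IsCycle

variable {x : V} {c : G.Walk x x}

lemma getVert_eq_getVert (hc : c.IsCycle) {i j : ℕ} (hi : i ≤ c.length) (hj : j ≤ c.length)
    (h : c.getVert i = c.getVert j) :
    i = j ∨ (i = 0 ∧ j = c.length) ∨ (i = c.length ∧ j = 0) := by
  by_cases hij : (1 ≤ i ∧ 1 ≤ j) ∨ (i ≤ c.length - 1 ∧ j ≤ c.length - 1)
  · rcases hij with hij | hij
    · exact Or.inl (hc.getVert_injOn ⟨hij.1, hi⟩ ⟨hij.2, hj⟩ h)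
    · exact Or.inl (hc.getVert_injOn' hij.1 hij.2 h)
  · omega

lemma exists_ne_mem_edges (hc : c.IsCycle) {v : V} {e : Sym2 V} (he : e ∈ c.edges)
    (hv : v ∈ e) : ∃ f ∈ c.edges, f ≠ e ∧ v ∈ f := by
  obtain ⟨u, rfl⟩ := Sym2.mem_iff_exists.mp hv
  have hdeg := hc.ncard_neighborSet_toSubgraph_eq_two (c.fst_mem_support_of_mem_edges he)
  obtain ⟨u', hu', hu'u⟩ := Set.exists_ne_of_one_lt_ncard (by rw [hdeg]; norm_num) u
  exact ⟨s(v, u'), adj_toSubgraph_iff_mem_edges.mp hu', fun h => hu'u (Sym2.congr_right.mp h),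
    Sym2.mem_mk_left _ _⟩

lemma consecutive_of_mem_getElem_edges (hc : c.IsCycle) {i j : ℕ} (hi : i < c.edges.length)
    (hj : j < c.edges.length) (hij : i ≠ j) {v : V} (hvi : v ∈ c.edges[i])
    (hvj : v ∈ c.edges[j]) :
    j = i + 1 ∨ i = j + 1 ∨ (i = 0 ∧ j = c.length - 1) ∨ (j = 0 ∧ i = c.length - 1) := by
  rw [Walk.length_edges] at hi hj
  rw [Walk.getElem_edges, Sym2.mem_iff] at hvi hvj
  obtain ⟨a, ha, rfl⟩ : ∃ a, (a = i ∨ a = i + 1) ∧ v = c.getVert a := by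
    rcases hvi with h | h <;> exact ⟨_, by simp, h⟩
  obtain ⟨b, hb, hab⟩ : ∃ b, (b = j ∨ b = j + 1) ∧ c.getVert a = c.getVert b := by
    rcases hvj with h | h <;> exact ⟨_, by simp, h⟩
  have := hc.getVert_eq_getVert (by omega) (by omega) hab
  omega

lemma sum_symmDiff_edges_modEq [DecidableEq (Sym2 V)] (hc : c.IsCycle) (w : Sym2 V → ℕ)
    (A : Finset (Sym2 V)) :
    ∑ e ∈ A ∆ c.edges.toFinset, w e ≡ ∑ e ∈ A, w e + (c.edges.map w).sum [MOD 2] :=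
  List.sum_toFinset w hc.edges_nodup ▸ sum_symmDiff_modEq_two A c.edges.toFinset w

end SimpleGraph.Walk.IsCycle

lemma AltList.getElem_mem_iff {S : Set (Sym2 V)} {l : List (Sym2 V)} (h : AltList S l) {i : ℕ}
    (hi : i + 1 < l.length) : l[i] ∈ S ↔ l[i + 1] ∉ S :=
  List.isChain_iff_getElem.mp h i hi

theorem altCycle_iff {S : Set (Sym2 V)} {x : V} {c : G.Walk x x} :
    AltCycle G S c ↔ c.IsCycle ∧ EdgesAlternate {e | e ∈ c.edges} S := by
  constructor
  · rintro ⟨hc, hchain, hwrap⟩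
    refine ⟨hc, fun v e f he hf hef hve hvf => ?_⟩
    obtain ⟨i, hi, rfl⟩ := List.getElem_of_mem he
    obtain ⟨j, hj, rfl⟩ := List.getElem_of_mem hf
    have hij : i ≠ j := fun h => hef (by subst h; rfl)
    have hwrap' := hwrap (List.ne_nil_of_mem he)
    rw [List.getLast_eq_getElem, List.head_eq_getElem] at hwrap'
    rcases hc.consecutive_of_mem_getElem_edges hi hj hij hve hvf with
      rfl | rfl | ⟨rfl, rfl⟩ | ⟨rfl, rfl⟩
    · exact hchain.getElem_mem_iff hj
    · have := hchain.getElem_mem_iff hi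
      tauto
    · simp only [Walk.length_edges] at hwrap'
      tauto
    · simpa only [Walk.length_edges] using hwrap'
  · rintro ⟨hc, halt⟩
    have hnd := hc.edges_nodup
    refine ⟨hc, List.isChain_iff_getElem.mpr fun i hi => ?_, fun hne => ?_⟩
    · refine halt (List.getElem_mem _) (List.getElem_mem _) (by simp [hnd.getElem_inj_iff])
        (v := c.getVert (i + 1)) ?_ ?_ <;> simp [Walk.getElem_edges]
    · rw [List.getLast_eq_getElem, List.head_eq_getElem]
      have := hc.three_le_length
      refine halt (List.getElem_mem _) (List.getElem_mem _)
        (by rw [Ne, hnd.getElem_inj_iff, c.length_edges]; omega)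
        (v := x) ?_ ?_
      · rw [Walk.getElem_edges, Walk.length_edges, Nat.sub_add_cancel (by omega), c.getVert_length]
        exact Sym2.mem_mk_right _ _
      · simp [Walk.getElem_edges]

namespace PerfM

variable {A B : Set (Sym2 V)}

lemma eq_of_mem (hA : PerfM G A) {v : V} {e f : Sym2 V} (he : e ∈ A) (hf : f ∈ A) (hve : v ∈ e)
    (hvf : v ∈ f) : e = f :=
  (hA.2 v).unique ⟨he, hve⟩ ⟨hf, hvf⟩

lemma finite (hA : PerfM G A) (hfin : A.Finite) : Finite V := by
  classical
  refine Set.finite_univ_iff.mp ((hfin.biUnion fun e _ => e.toFinset.finite_toSet).subset ?_)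
  intro v _
  obtain ⟨e, ⟨he, hve⟩, -⟩ := hA.2 v
  exact Set.mem_biUnion he (Sym2.mem_toFinset.mpr hve)

lemma isPerfectMatching_top (hA : PerfM G A) :
    (⊤ : (fromEdgeSet A).Subgraph).IsPerfectMatching := by
  rw [Subgraph.isPerfectMatching_iff]
  intro v
  obtain ⟨e, ⟨he, hve⟩, huniq⟩ := hA.2 v
  obtain ⟨u, rfl⟩ := Sym2.mem_iff_exists.mp hve
  refine ⟨u, ⟨he, (hA.1 he).ne⟩, fun u' ⟨hu', _⟩ => ?_⟩
  exact Sym2.congr_right.mp (huniq _ ⟨hu', Sym2.mem_mk_left _ _⟩)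

lemma edgesAlternate_symmDiff (hA : PerfM G A) (hB : PerfM G B) : EdgesAlternate (A ∆ B) A := by
  intro v e f he hf hef hve hvf
  rw [Set.mem_symmDiff] at he hf
  constructor
  · exact fun heA hfA => hef (hA.eq_of_mem heA hfA hve hvf)
  · intro hfA
    by_contra heA
    exact hef (hB.eq_of_mem (he.resolve_left (by tauto)).1 (hf.resolve_left (by tauto)).1 hve hvf)

lemma symmDiff (hA : PerfM G A) {D : Set (Sym2 V)} (hDG : D ⊆ G.edgeSet)
    (halt : EdgesAlternate D A) (hdeg : ∀ ⦃v e⦄, e ∈ D → v ∈ e → ∃ f ∈ D, f ≠ e ∧ v ∈ f) :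
    PerfM G (A ∆ D) := by
  refine ⟨Set.symmDiff_subset_union.trans (Set.union_subset hA.1 hDG), fun v => ?_⟩
  obtain ⟨a, ⟨haA, hva⟩, -⟩ := hA.2 v
  by_cases haD : a ∈ D
  · obtain ⟨f, hfD, hfa, hvf⟩ := hdeg haD hva
    have hfA : f ∉ A := fun hfA => hfa (hA.eq_of_mem hfA haA hvf hva)
    refine ⟨f, ⟨Or.inr ⟨hfD, hfA⟩, hvf⟩, fun g ⟨hg, hvg⟩ => ?_⟩
    rcases hg with ⟨hgA, hgD⟩ | ⟨hgD, hgA⟩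
    · exact absurd (hA.eq_of_mem hgA haA hvg hva ▸ haD) hgD
    · by_contra hgf
      exact hgA ((halt hgD hfD hgf hvg hvf).mpr hfA)
  · refine ⟨a, ⟨Or.inl ⟨haA, haD⟩, hva⟩, fun g ⟨hg, hvg⟩ => ?_⟩
    rcases hg with ⟨hgA, -⟩ | ⟨hgD, hgA⟩
    · exact hA.eq_of_mem hgA haA hvg hva
    · obtain ⟨f, hfD, hfg, hvf⟩ := hdeg hgD hvg
      have hfA : f ∈ A := (halt hfD hgD hfg hvf hvg).mpr hgA
      exact absurd (hA.eq_of_mem hfA haA hvf hva ▸ hfD) haD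

lemma exists_isCycle_symmDiff [Finite V] (hA : PerfM G A) (hB : PerfM G B) {e : Sym2 V}
    (he : e ∈ A ∆ B) :
    ∃ (x : V) (c : G.Walk x x), c.IsCycle ∧ e ∈ c.edges ∧ {f | f ∈ c.edges} ⊆ A ∆ B := by
  set H := fromEdgeSet A ∆ fromEdgeSet B
  have hcyc : H.IsCycles := hA.isPerfectMatching_top.symmDiff_isCycles hB.isPerfectMatching_top
  have hH : H.edgeSet = A ∆ B := by
    ext e
    have hAe : e ∈ A → ¬e.IsDiag := fun h => G.not_isDiag_of_mem_edgeSet (hA.1 h)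
    have hBe : e ∈ B → ¬e.IsDiag := fun h => G.not_isDiag_of_mem_edgeSet (hB.1 h)
    simp [H, symmDiff_def]
    tauto
  have hHG : H ≤ G :=
    edgeSet_subset_edgeSet.mp (hH ▸ Set.symmDiff_subset_union.trans (Set.union_subset hA.1 hB.1))
  induction e with
  | _ v w =>
  have hvw : H.Adj v w := (mem_edgeSet H).mp (hH ▸ he)
  obtain ⟨x, p, hp, hvwp⟩ := adj_and_reachable_delete_edges_iff_exists_cycle.mp
    ⟨hvw, hcyc.reachable_deleteEdges hvw⟩
  refine ⟨x, p.mapLe hHG, hp.mapLe hHG, ?_, ?_⟩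
  · rwa [Walk.edges_mapLe_eq_edges]
  · intro f hf
    rw [Set.mem_ofPred_eq, Walk.edges_mapLe_eq_edges] at hf
    exact hH ▸ p.edges_subset_edgeSet hf

end PerfM

lemma AltCycle.perfM_symmDiff {A : Set (Sym2 V)} {x : V} {c : G.Walk x x}
    (hc : AltCycle G A c) (hA : PerfM G A) : PerfM G (A ∆ {e | e ∈ c.edges}) :=
  let ⟨hcyc, halt⟩ := altCycle_iff.mp hc
  hA.symmDiff c.edges_subset_edgeSet halt fun _ _ he hv => hcyc.exists_ne_mem_edges he hv

theorem exists_altCycle_odd_of_not_modEq (w : Sym2 V → ℕ) {M M' : Finset (Sym2 V)}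
    (hM : PerfM G ↑M) (hM' : PerfM G ↑M') (hw : ¬∑ e ∈ M, w e ≡ ∑ e ∈ M', w e [MOD 2]) :
    ∃ (x : V) (c : G.Walk x x), AltCycle G ↑M c ∧ Odd (c.edges.map w).sum := by
  classical
  have : Finite V := hM.finite M.finite_toSet
  induction hn : #(M ∆ M') using Nat.strong_induction_on generalizing M' with
  | _ n ih =>
  obtain ⟨e, he⟩ : (M ∆ M').Nonempty := by
    rw [nonempty_iff_ne_empty, Ne, ← bot_eq_empty, symmDiff_eq_bot]
    rintro rfl
    exact hw rfl
  rw [← mem_coe, coe_symmDiff] at he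
  obtain ⟨x, c, hc, hec, hcD⟩ := hM.exists_isCycle_symmDiff hM' he
  by_cases hodd : Odd (c.edges.map w).sum
  · exact ⟨x, c, altCycle_iff.mpr ⟨hc, (hM.edgesAlternate_symmDiff hM').mono hcD⟩, hodd⟩
  set E := c.edges.toFinset
  have hE : (↑E : Set (Sym2 V)) = {e | e ∈ c.edges} := List.coe_toFinset _
  rw [symmDiff_comm] at hcD
  have hc' : AltCycle G ↑M' c := altCycle_iff.mpr ⟨hc, (hM'.edgesAlternate_symmDiff hM).mono hcD⟩
  have hM'' : PerfM G ↑(M' ∆ E) := by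
    rw [coe_symmDiff, hE]
    exact hc'.perfM_symmDiff hM'
  have hED : E ⊆ M ∆ M' := by
    rw [← coe_subset, coe_symmDiff, hE, symmDiff_comm]
    exact hcD
  refine ih _ ?_ hM'' ?_ rfl
  · rw [← hn, ← symmDiff_assoc, symmDiff_of_ge hED]
    exact card_lt_card (sdiff_ssubset hED ⟨e, List.mem_toFinset.mpr hec⟩)
  · have hflip : ∑ e ∈ M' ∆ E, w e ≡ _ [MOD 2] := hc.sum_symmDiff_edges_modEq w M'
    obtain ⟨m, hm⟩ := Nat.not_odd_iff_even.mp hodd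
    unfold Nat.ModEq at *
    omega

end

theorem stmt4_general {V : Type*} (G : SimpleGraph V)
    (w : Sym2 V → ℕ)
    (M : Finset (Sym2 V)) (hM : PerfM G ↑M) (k : ℤ) :
    (∃ M' : Finset (Sym2 V), PerfM G ↑M' ∧ ((∑ e ∈ M', w e : ℕ) : ℤ) ≡ k [ZMOD 2]) ↔
      (((∑ e ∈ M, w e : ℕ) : ℤ) ≡ k [ZMOD 2] ∨
        ∃ (x : V) (c : G.Walk x x), AltCycle G ↑M c ∧ Odd ((c.edges.map w).sum)) := by
  classical
  constructor
  · rintro ⟨M', hM', hk⟩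
    by_cases hMk : ((∑ e ∈ M, w e : ℕ) : ℤ) ≡ k [ZMOD 2]
    · exact Or.inl hMk
    refine Or.inr (exists_altCycle_odd_of_not_modEq w hM hM' fun h => hMk ?_)
    exact (Int.natCast_modEq_iff.mpr h).trans hk
  · rintro (hMk | ⟨x, c, hc, hodd⟩)
    · exact ⟨M, hM, hMk⟩
    by_cases hMk : ((∑ e ∈ M, w e : ℕ) : ℤ) ≡ k [ZMOD 2]
    · exact ⟨M, hM, hMk⟩
    refine ⟨M ∆ c.edges.toFinset, ?_, ?_⟩
    · rw [coe_symmDiff, List.coe_toFinset]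
      exact hc.perfM_symmDiff hM
    · have hflip := hc.1.sum_symmDiff_edges_modEq w M
      obtain ⟨m, hm⟩ := hodd
      unfold Nat.ModEq at hflip
      unfold Int.ModEq at *
      omega

/-- `G` has a perfect matching of weight ≡ k (mod 2) iff the weight of `M` is ≡ k
(mod 2) or `G` has an `M`-alternating cycle of odd weight. -/
theorem stmt4 {V : Type*} [DecidableEq V] (G : SimpleGraph V)
    (w : Sym2 V → ℕ) (hw : ∀ e, w e ≤ 1)
    (M : Finset (Sym2 V)) (hM : PerfM G ↑M) (k : ℤ) :
    (∃ M' : Finset (Sym2 V), PerfM G ↑M' ∧ ((∑ e ∈ M', w e : ℕ) : ℤ) ≡ k [ZMOD 2]) ↔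
      (((∑ e ∈ M, w e : ℕ) : ℤ) ≡ k [ZMOD 2] ∨
        ∃ (x : V) (c : G.Walk x x), AltCycle G ↑M c ∧ Odd ((c.edges.map w).sum)) :=
  stmt4_general G w M hM k
end

section
/- Let G be a graph with vertex set V, and let G' be obtained from G by adding, for each vertex v ∈ V, a new vertex v' and a new edge {v, v'}. Then G' has a perfect matching, and for every integer k, G has an odd cycle transversal of size at most k if and only if G' does. -/
/-- `X` is an odd cycle transversal of `G`: `G - X` is bipartite, i.e. the vertices
outside `X` can be 2-colored so that every edge avoiding `X` is bichromatic. -/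
def IsOCT {V : Type*} (G : SimpleGraph V) (X : Set V) : Prop :=
  ∃ A : Set V, ∀ u v : V, G.Adj u v → u ∉ X → v ∉ X → (u ∈ A ↔ v ∉ A)

/-- `G'`: to each vertex `v` of `G` (left copy) attach a new pendant vertex `v'`
(right copy) by an edge. -/
def addPendants {V : Type*} (G : SimpleGraph V) : SimpleGraph (V ⊕ V) where
  Adj x y :=
    match x, y with
    | Sum.inl u, Sum.inl v => G.Adj u v
    | Sum.inl u, Sum.inr v => u = v
    | Sum.inr u, Sum.inl v => u = v
    | Sum.inr _, Sum.inr _ => False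
  symm := by
    constructor
    rintro (u | u) (v | v) h
    · exact h.symm
    · exact h.symm
    · exact h.symm
    · exact h.elim
  loopless := by
    constructor
    rintro (u | u) h
    · exact G.loopless.irrefl u h
    · exact h

/-!
The pendant edges `{v, v'}` form a perfect matching of `G'`. An odd cycle transversal `X'`
of `G'` restricts to the odd cycle transversal `{v | v ∈ X'}` of the induced copy of `G`,
which is no larger. Conversely, a 2-coloring of `G - X` extends to `G' - X` by giving each
pendant vertex `v'` the colour opposite to `v`; this is harmless even for `v ∈ X`, since
`v'` then has no neighbour left.
-/

section

variable {V W : Type*}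

theorem IsOCT.comap {G : SimpleGraph V} {H : SimpleGraph W} (f : G →g H) {X : Set W}
    (hX : IsOCT H X) : IsOCT G (f ⁻¹' X) := by
  obtain ⟨A, hA⟩ := hX
  exact ⟨f ⁻¹' A, fun u v huv hu hv => hA _ _ (f.map_adj huv) hu hv⟩

@[simps]
def addPendantsEmbedding (G : SimpleGraph V) : G ↪g addPendants G where
  toFun := Sum.inl
  inj' := Sum.inl_injective
  map_rel_iff' := Iff.rfl

theorem IsOCT.addPendants_image_inl {G : SimpleGraph V} {X : Set V} (hX : IsOCT G X) :
    IsOCT (addPendants G) (Sum.inl '' X) := by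
  obtain ⟨A, hA⟩ := hX
  refine ⟨Sum.elim A Aᶜ, ?_⟩
  rintro (u | u) (v | v) huv hu hv
  · exact hA u v huv (fun h => hu ⟨u, h, rfl⟩) (fun h => hv ⟨v, h, rfl⟩)
  · obtain rfl : u = v := huv
    exact not_not.symm
  · obtain rfl : u = v := huv
    exact Iff.rfl
  · exact huv.elim

theorem mem_pendantEdge_iff (x : V ⊕ V) (v : V) :
    x ∈ s(Sum.inl v, Sum.inr v) ↔ Sum.elim id id x = v := by
  cases x <;> simp [eq_comm]

theorem perfM_addPendants (G : SimpleGraph V) :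
    PerfM (addPendants G) (Set.range fun v => s(Sum.inl v, Sum.inr v)) := by
  refine ⟨Set.range_subset_iff.2 fun v => (addPendants G).mem_edgeSet.2 rfl, fun x => ?_⟩
  refine ⟨_, ⟨⟨Sum.elim id id x, rfl⟩, (mem_pendantEdge_iff x _).2 rfl⟩, ?_⟩
  rintro _ ⟨⟨v, rfl⟩, hx⟩
  rw [(mem_pendantEdge_iff x v).1 hx]

end

theorem stmt5_general {V : Type*} (G : SimpleGraph V) :
    (∃ M : Set (Sym2 (V ⊕ V)), PerfM (addPendants G) M) ∧
    ∀ k : ℕ, (∃ X : Finset V, IsOCT G ↑X ∧ X.card ≤ k) ↔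
      (∃ X' : Finset (V ⊕ V), IsOCT (addPendants G) ↑X' ∧ X'.card ≤ k) := by
  refine ⟨⟨_, perfM_addPendants G⟩, fun k => ⟨?_, ?_⟩⟩
  · rintro ⟨X, hX, hk⟩
    refine ⟨X.map .inl, ?_, by rwa [Finset.card_map]⟩
    simpa using hX.addPendants_image_inl
  · rintro ⟨X', hX', hk⟩
    refine ⟨X'.toLeft, ?_, Finset.card_toLeft_le.trans hk⟩
    convert hX'.comap (addPendantsEmbedding G).toHom
    ext
    simp

theorem stmt5 {V : Type*} [Fintype V] [DecidableEq V] (G : SimpleGraph V) :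
    (∃ M : Set (Sym2 (V ⊕ V)), PerfM (addPendants G) M) ∧
    ∀ k : ℕ, (∃ X : Finset V, IsOCT G ↑X ∧ X.card ≤ k) ↔
      (∃ X' : Finset (V ⊕ V), IsOCT (addPendants G) ↑X' ∧ X'.card ≤ k) :=
  stmt5_general G
end

section
/- Let G = (V,E) be a graph with a perfect matching M, let F ⊆ M, and construct the graph G^F with vertex set V₁^F ∪ V₂^F where V₁^F = {v₁ : v ∈ V \ V(F)} and V₂^F = {v₂ : v ∈ V}, and edges {v₁, v₂} for v ∈ V \ V(F) together with edges {u_i, v_i} for each edge {u,v} ∈ E with both copies present in V_i^F (i = 1,2). Then M^F = {{u₁,v₁} : {u,v} ∈ M \ F} ∪ {{u₂,v₂} : {u,v} ∈ M} is a perfect matching of G^F. -/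
/-- The graph `G^F`: the left class consists of copies `v₁` of the vertices `v ∉ V(F)`,
the right class of copies `v₂` of all vertices; there is an edge `{v₁, v₂}` for each
`v ∉ V(F)`, and a copy of each edge of `G` inside each class. -/
def GF {V : Type*} (G : SimpleGraph V) (F : Set (Sym2 V)) :
    SimpleGraph ({v : V // ∀ e ∈ F, v ∉ e} ⊕ V) where
  Adj x y :=
    match x, y with
    | Sum.inl a, Sum.inl b => G.Adj a.1 b.1
    | Sum.inl a, Sum.inr b => a.1 = b
    | Sum.inr a, Sum.inl b => b.1 = a
    | Sum.inr a, Sum.inr b => G.Adj a b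
  symm := by
    refine ⟨?_⟩
    rintro (a | a) (b | b) h
    · exact h.symm
    · exact h
    · exact h
    · exact h.symm
  loopless := by
    refine ⟨?_⟩
    rintro (a | a) h
    · exact G.loopless.irrefl a.1 h
    · exact G.loopless.irrefl a h

/-! A vertex outside `V(F)` has its `M`-partner outside `V(F)` as well, since the only
`M`-edge at the partner is the one it shares with that vertex and `F ⊆ M`. Hence `M`
restricts to a perfect matching of the vertices outside `V(F)`, which `M^F` places on the
first copy, while `M` itself is placed on the second copy. -/

open Function

section

variable {V W : Type*}

def CoversUniquely (M : Set (Sym2 V)) : Prop :=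
  ∀ v : V, ∃! e, e ∈ M ∧ v ∈ e

theorem CoversUniquely.eq_of_mem {M : Set (Sym2 V)} (hM : CoversUniquely M) {v : V}
    {e e' : Sym2 V} (he : e ∈ M) (hv : v ∈ e) (he' : e' ∈ M) (hv' : v ∈ e') : e = e' :=
  (hM v).unique ⟨he, hv⟩ ⟨he', hv'⟩

theorem CoversUniquely.notMem_of_mem_of_subset {M F : Set (Sym2 V)} (hM : CoversUniquely M)
    (hF : F ⊆ M) {v w : V} (hvw : s(v, w) ∈ M) (hv : ∀ e ∈ F, v ∉ e) : ∀ e ∈ F, w ∉ e := by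
  intro e he hw
  have : e = s(v, w) := hM.eq_of_mem (hF he) hw hvw (Sym2.mem_mk_right v w)
  exact hv e he (this ▸ Sym2.mem_mk_left v w)

theorem CoversUniquely.comap_subtype {M : Set (Sym2 V)} (hM : CoversUniquely M) {p : V → Prop}
    (hp : ∀ v w, s(v, w) ∈ M → p v → p w) :
    CoversUniquely {e : Sym2 (Subtype p) | Sym2.map Subtype.val e ∈ M} := by
  intro a
  obtain ⟨e, ⟨he, ha⟩, -⟩ := hM a
  obtain ⟨w, rfl⟩ := Sym2.mem_iff_exists.mp ha
  refine ⟨s(a, ⟨w, hp a w he a.2⟩), ⟨he, Sym2.mem_mk_left _ _⟩, ?_⟩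
  rintro e' ⟨he', ha'⟩
  exact Sym2.map.injective Subtype.val_injective <|
    hM.eq_of_mem he' (Sym2.mem_map.mpr ⟨a, ha', rfl⟩) he (Sym2.mem_mk_left _ _)

theorem CoversUniquely.existsUnique_image_map_union {S : Set (Sym2 V)} (hS : CoversUniquely S)
    {f : V → W} (hf : Injective f) {R : Set (Sym2 W)} (hR : ∀ e ∈ R, ∀ a, f a ∉ e) (a : V) :
    ∃! e, e ∈ Sym2.map f '' S ∪ R ∧ f a ∈ e := by
  obtain ⟨e, ⟨he, ha⟩, hu⟩ := hS a
  refine ⟨Sym2.map f e, ⟨.inl ⟨e, he, rfl⟩, Sym2.mem_map.mpr ⟨a, ha, rfl⟩⟩, ?_⟩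
  rintro _ ⟨⟨e', he', rfl⟩ | he', ha'⟩
  · obtain ⟨b, hb, hba⟩ := Sym2.mem_map.mp ha'
    rw [hu e' ⟨he', hf hba ▸ hb⟩]
  · exact absurd ha' (hR _ he' a)

theorem CoversUniquely.sum {S : Set (Sym2 V)} {T : Set (Sym2 W)} (hS : CoversUniquely S)
    (hT : CoversUniquely T) :
    CoversUniquely (Sym2.map Sum.inl '' S ∪ Sym2.map Sum.inr '' T) := by
  rintro (a | a)
  · refine hS.existsUnique_image_map_union Sum.inl_injective ?_ a
    rintro _ ⟨e, -, rfl⟩ a ha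
    simp [Sym2.mem_map] at ha
  · rw [Set.union_comm]
    refine hT.existsUnique_image_map_union Sum.inr_injective ?_ a
    rintro _ ⟨e, -, rfl⟩ a ha
    simp [Sym2.mem_map] at ha

theorem Sym2.mem_image_map_iff {f : V → W} {S : Set (Sym2 V)} {x : Sym2 W} :
    x ∈ Sym2.map f '' S ↔ ∃ a b, x = s(f a, f b) ∧ s(a, b) ∈ S := by
  simp only [Set.mem_image, Sym2.exists, Sym2.map_mk, eq_comm (b := x), and_comm]

theorem perfM_iff {G : SimpleGraph V} {M : Set (Sym2 V)} :
    PerfM G M ↔ M ⊆ G.edgeSet ∧ CoversUniquely M :=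
  Iff.rfl

end

/-- `M^F = {{u₁,v₁} : {u,v} ∈ M \ F} ∪ {{u₂,v₂} : {u,v} ∈ M}` is a perfect matching
of `G^F`. -/
theorem stmt14 {V : Type*} (G : SimpleGraph V) (M F : Set (Sym2 V))
    (hM : PerfM G M) (hF : F ⊆ M) :
    PerfM (GF G F)
      {x | (∃ a b : {v : V // ∀ e ∈ F, v ∉ e},
              x = s(Sum.inl a, Sum.inl b) ∧ s(a.1, b.1) ∈ M ∧ s(a.1, b.1) ∉ F) ∨
           (∃ a b : V, x = s(Sum.inr a, Sum.inr b) ∧ s(a, b) ∈ M)} := by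
  obtain ⟨hMG, hM⟩ := perfM_iff.mp hM
  refine perfM_iff.mpr ⟨?_, ?_⟩
  · rintro x (⟨a, b, rfl, hab, -⟩ | ⟨a, b, rfl, hab⟩) <;> exact hMG hab
  · have hMF (a b : {v : V // ∀ e ∈ F, v ∉ e}) : s(a.1, b.1) ∉ F :=
      fun h ↦ a.2 _ h (Sym2.mem_mk_left _ _)
    convert (hM.comap_subtype fun v w hvw ↦ hM.notMem_of_mem_of_subset hF hvw).sum hM using 1
    ext x
    simp only [Set.mem_ofPred_eq, Set.mem_union, Sym2.mem_image_map_iff, Sym2.map_mk, hMF,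
      not_false_eq_true, and_true]
end
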